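/- arXiv:0705.3664 — 6 statements merged into one kernel-verified Lean document; each statement's English description precedes it below -/
import Mathlib

section
/- Let F_n = 2^(2^n) + 1 with n ≥ 1, and define the sequence S_0 = 5, S_{i} = S_{i-1}^2 - 2. Then F_n is prime if and only if F_n divides S_{2^n - 2}. -/
def S : ℕ → ℤ
  | 0 => 5
  | i + 1 => (S i) ^ 2 - 2

/-!
Let `ω, ω'` be the roots of `X ^ 2 - 5 X + 1`, i.e. `(5 ± √21) / 2`. Then
`S i = ω ^ 2 ^ i + ω' ^ 2 ^ i`, and since `ω ω' = 1` we get `S m = 0 ↔ ω ^ 2 ^ (m + 1) = -1`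
in any commutative ring.

If `q = F_n` is prime then `q ≡ 1 [MOD 4]`, `q ≡ 2 [MOD 3]` and `q ≡ 3, 5 [MOD 7]`, so by
quadratic reciprocity `3` and `7` are non-residues mod `q`. Frobenius therefore negates `√3`, `√7`
and `τ = (√3 + √7) / 2`, and as `τ ^ 2 = ω` this gives `ω ^ ((q - 1) / 2) = τ ^ (q - 1) = -1`.

Conversely, if `F_n ∣ S (2 ^ n - 2)` and `p` is a prime factor of `F_n`, then in characteristic
`p` the element `ω` has order `2 ^ 2 ^ n = F_n - 1`. Frobenius sends `ω` to a root of the same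
quadratic, `ω` or `ω' = ω⁻¹`, so this order divides `p - 1` or `p + 1`. Hence `F_n ≤ p + 2`,
which for the least prime factor `p` forces `p = F_n`.
-/

open Nat

theorem odd_S (i : ℕ) : Odd (S i) := by
  induction i with
  | zero => decide
  | succ i ih => exact (ih.pow.sub_even even_two : Odd (S i ^ 2 - 2))

section RootPair

variable {K : Type*} [CommRing K] {ω ω' : K}

theorem S_cast_eq (hmul : ω * ω' = 1) (hadd : ω + ω' = 5) (i : ℕ) :
    (S i : K) = ω ^ 2 ^ i + ω' ^ 2 ^ i := by
  induction i with
  | zero => simp [S, hadd]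
  | succ i ih =>
    have hpow : (ω * ω') ^ 2 ^ i = 1 := by rw [hmul, one_pow]
    rw [S, Int.cast_sub, Int.cast_pow, ih, Int.cast_ofNat, pow_succ 2 i, pow_mul, pow_mul]
    linear_combination 2 * hpow

theorem S_cast_eq_zero_iff (hmul : ω * ω' = 1) (hadd : ω + ω' = 5) (m : ℕ) :
    (S m : K) = 0 ↔ ω ^ 2 ^ (m + 1) = -1 := by
  have hinv : ω ^ 2 ^ m * ω' ^ 2 ^ m = 1 := by rw [← mul_pow, hmul, one_pow]
  rw [S_cast_eq hmul hadd, pow_succ, pow_mul]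
  constructor
  · intro h
    linear_combination ω ^ 2 ^ m * h - hinv
  · intro h
    linear_combination ω' ^ 2 ^ m * h - ω ^ 2 ^ m * hinv

end RootPair

open Polynomial in
theorem exists_mul_eq_one_add_eq (K : Type*) [Field K] [IsAlgClosed K] (c : K) :
    ∃ ω ω' : K, ω * ω' = 1 ∧ ω + ω' = c := by
  obtain ⟨ω, hω⟩ := IsAlgClosed.exists_root (C 1 * X ^ 2 + C (-c) * X + C 1)
    (by rw [degree_quadratic one_ne_zero]; decide)
  refine ⟨ω, c - ω, ?_, by ring⟩
  simp only [IsRoot, eval_add, eval_mul, eval_C, eval_pow, eval_X] at hω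
  linear_combination -hω

theorem orderOf_dvd_sub_one_or_dvd_add_one {K : Type*} [Field K] (p : ℕ) [Fact p.Prime]
    [CharP K p] {ω ω' : K} {c : ℤ} (hmul : ω * ω' = 1) (hadd : ω + ω' = c) :
    orderOf ω ∣ p - 1 ∨ orderOf ω ∣ p + 1 := by
  have hmul_p : ω ^ p * ω' ^ p = ω * ω' := by
    rw [← mul_pow, hmul, one_pow]
  have hadd_p : ω ^ p + ω' ^ p = ω + ω' := by
    have h := congrArg (frobenius K p) hadd
    rwa [map_add, map_intCast, frobenius_def, frobenius_def, ← hadd] at h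
  have hroot : (ω ^ p - ω) * (ω ^ p - ω') = 0 := by
    linear_combination ω ^ p * hadd_p - hmul_p
  have hω : ω ≠ 0 := left_ne_zero_of_mul_eq_one hmul
  rcases mul_eq_zero.mp hroot with h | h
  · left
    apply orderOf_dvd_of_pow_eq_one
    apply mul_right_cancel₀ hω
    rw [← pow_succ, Nat.sub_add_cancel (Fact.out : p.Prime).one_le, one_mul]
    exact sub_eq_zero.mp h
  · right
    apply orderOf_dvd_of_pow_eq_one
    rw [pow_succ, sub_eq_zero.mp h, mul_comm, hmul]

theorem two_pow_le_add_one_of_dvd_S {p : ℕ} (hp : p.Prime) {m : ℕ} (hdvd : (p : ℤ) ∣ S m) :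
    2 ^ (m + 2) ≤ p + 1 := by
  have := Fact.mk hp
  have hp2 : 2 < p := hp.two_le.lt_of_ne' <| by
    rintro rfl
    exact Int.not_even_iff_odd.mpr (odd_S m) (even_iff_two_dvd.mpr hdvd)
  have := Fact.mk hp2
  let K := AlgebraicClosure (ZMod p)
  obtain ⟨ω, ω', hmul, hadd⟩ := exists_mul_eq_one_add_eq K 5
  have hS : (S m : K) = 0 := by
    rw [← map_intCast (algebraMap (ZMod p) K), (ZMod.intCast_zmod_eq_zero_iff_dvd _ p).mpr hdvd,
      map_zero]
  have horder : orderOf ω = 2 ^ (m + 2) := by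
    have hneg := (S_cast_eq_zero_iff hmul hadd m).mp hS
    apply orderOf_eq_prime_pow
    · rw [hneg]; exact CharP.neg_one_ne_one K p
    · rw [pow_succ, pow_mul, hneg, neg_one_sq]
  have hadd' : ω + ω' = ((5 : ℤ) : K) := by rw [hadd, Int.cast_ofNat]
  rw [← horder]
  rcases orderOf_dvd_sub_one_or_dvd_add_one p hmul hadd' with h | h
  · exact (Nat.le_of_dvd (by omega) h).trans (by omega)
  · exact Nat.le_of_dvd (by omega) h

theorem pow_char_eq_neg_of_legendreSym_eq_neg_one {K : Type*} [Field K] {p : ℕ} [Fact p.Prime]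
    [CharP K p] (hp : p ≠ 2) {a : ℤ} (ha : legendreSym p a = -1) {s : K} (hs : s ^ 2 = a) :
    s ^ p = -s := by
  obtain ⟨k, hk⟩ := (Fact.out : p.Prime).odd_of_ne_two hp
  have hpow : (a : ZMod p) ^ k = -1 := by
    rw [← show p / 2 = k by omega, ← legendreSym.eq_pow, ha, Int.cast_neg, Int.cast_one]
  have hpow_K : (a : K) ^ k = -1 := by
    rw [← map_intCast (ZMod.castHom (dvd_refl p) K), ← map_pow, hpow, map_neg, map_one]
  rw [hk, pow_succ, pow_mul, hs, hpow_K, neg_one_mul]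

theorem S_cast_eq_zero_of_legendreSym {K : Type*} [Field K] [IsAlgClosed K] {q : ℕ}
    [Fact q.Prime] [CharP K q] (hq : q ≠ 2) (h3 : legendreSym q 3 = -1)
    (h7 : legendreSym q 7 = -1) {m : ℕ} (hm : q / 2 = 2 ^ (m + 1)) : (S m : K) = 0 := by
  have h2 : (2 : K) ≠ 0 := Ring.two_ne_zero (by rw [ringChar.eq K q]; exact hq)
  obtain ⟨s, hs⟩ := IsAlgClosed.exists_pow_nat_eq (3 : K) two_pos
  obtain ⟨t, ht⟩ := IsAlgClosed.exists_pow_nat_eq (7 : K) two_pos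
  have hs_q : s ^ q = -s := pow_char_eq_neg_of_legendreSym_eq_neg_one hq h3 (by exact_mod_cast hs)
  have ht_q : t ^ q = -t := pow_char_eq_neg_of_legendreSym_eq_neg_one hq h7 (by exact_mod_cast ht)
  -- `ω = (5 + √21) / 2` is the square of `τ = (√3 + √7) / 2`, which Frobenius sends to `-τ`
  have hτ_q : ((s + t) / 2) ^ q = -((s + t) / 2) := by
    rw [← frobenius_def, map_div₀, map_add, map_ofNat, frobenius_def, frobenius_def, hs_q,
      ht_q]
    ring
  have hmul : ((s + t) / 2) ^ 2 * ((s - t) / 2) ^ 2 = 1 := by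
    field_simp
    linear_combination (s ^ 2 - t ^ 2 - 4) * hs - (s ^ 2 - t ^ 2 - 4) * ht
  have hadd : ((s + t) / 2) ^ 2 + ((s - t) / 2) ^ 2 = 5 := by
    field_simp
    linear_combination 2 * hs + 2 * ht
  have hτ0 : (s + t) / 2 ≠ 0 := fun h => by simp [h] at hmul
  obtain ⟨k, hk⟩ := (Fact.out : q.Prime).odd_of_ne_two hq
  refine (S_cast_eq_zero_iff hmul hadd m).mpr ?_
  rw [← hm, show q / 2 = k by omega, ← pow_mul]
  apply mul_right_cancel₀ hτ0
  rw [← pow_succ, ← hk, hτ_q, neg_one_mul]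

theorem dvd_S_of_legendreSym {q : ℕ} [Fact q.Prime] (hq : q ≠ 2)
    (h3 : legendreSym q 3 = -1) (h7 : legendreSym q 7 = -1) {m : ℕ} (hm : q / 2 = 2 ^ (m + 1)) :
    (q : ℤ) ∣ S m := by
  rw [← ZMod.intCast_zmod_eq_zero_iff_dvd]
  apply (algebraMap (ZMod q) (AlgebraicClosure (ZMod q))).injective
  rw [map_intCast, map_zero, S_cast_eq_zero_of_legendreSym hq h3 h7 hm]

theorem legendreSym_eq_legendreSym_mod {q r : ℕ} [Fact q.Prime] [Fact r.Prime] (hq : q % 4 = 1)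
    (hr : r ≠ 2) : legendreSym q r = legendreSym r (q % r : ℕ) := by
  rw [← legendreSym.quadratic_reciprocity_one_mod_four hq hr, legendreSym.mod]
  norm_cast

instance fact_prime_seven : Fact (Nat.Prime 7) := ⟨by norm_num⟩

theorem legendreSym_three_eq_neg_one {q : ℕ} [Fact q.Prime] (h4 : q % 4 = 1) (h3 : q % 3 = 2) :
    legendreSym q 3 = -1 := by
  have h := legendreSym_eq_legendreSym_mod (r := 3) h4 (by decide)
  rw [h3, Nat.cast_ofNat] at h
  rw [h]
  decide

theorem legendreSym_seven_eq_neg_one {q : ℕ} [Fact q.Prime] (h4 : q % 4 = 1)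
    (h7 : q % 7 = 3 ∨ q % 7 = 5) : legendreSym q 7 = -1 := by
  have h := legendreSym_eq_legendreSym_mod (r := 7) h4 (by decide)
  rw [Nat.cast_ofNat] at h
  rw [h]
  rcases h7 with h7 | h7 <;> rw [h7] <;> decide

theorem fermatNumber_mod_four {n : ℕ} (hn : n ≠ 0) : fermatNumber n % 4 = 1 := by
  obtain ⟨k, rfl⟩ := exists_eq_succ_of_ne_zero hn
  rw [fermatNumber, pow_succ', pow_mul, Nat.add_mod, Nat.pow_mod]
  simp

theorem fermatNumber_mod_three {n : ℕ} (hn : n ≠ 0) : fermatNumber n % 3 = 2 := by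
  obtain ⟨k, rfl⟩ := exists_eq_succ_of_ne_zero hn
  rw [fermatNumber, pow_succ, mul_comm, pow_mul, Nat.add_mod, Nat.pow_mod]
  simp

theorem fermatNumber_mod_seven (n : ℕ) : fermatNumber n % 7 = 3 ∨ fermatNumber n % 7 = 5 := by
  have h3 : ¬ 3 ∣ 2 ^ n := fun h => by
    have := Nat.prime_three.dvd_of_dvd_pow h
    omega
  rw [fermatNumber, ← Nat.div_add_mod (2 ^ n) 3, pow_add, pow_mul, Nat.add_mod, Nat.mul_mod,
    Nat.pow_mod]
  have : 2 ^ n % 3 = 1 ∨ 2 ^ n % 3 = 2 := by omega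
  rcases this with h | h <;> simp [h]

theorem dvd_S_of_fermatNumber_prime {n : ℕ} (hn : n ≠ 0) (hprime : (fermatNumber n).Prime) :
    (fermatNumber n : ℤ) ∣ S (2 ^ n - 2) := by
  have := Fact.mk hprime
  have h4 := fermatNumber_mod_four hn
  have hhalf : fermatNumber n / 2 = 2 ^ (2 ^ n - 2 + 1) := by
    obtain ⟨N, hN⟩ := Nat.exists_eq_add_of_le' (Nat.le_self_pow hn 2)
    rw [fermatNumber, hN, Nat.add_sub_cancel, pow_succ]
    omega
  exact dvd_S_of_legendreSym (by omega)
    (legendreSym_three_eq_neg_one h4 (fermatNumber_mod_three hn))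
    (legendreSym_seven_eq_neg_one h4 (fermatNumber_mod_seven n)) hhalf

theorem fermatNumber_prime_of_dvd_S {n : ℕ} (hn : n ≠ 0)
    (hdvd : (fermatNumber n : ℤ) ∣ S (2 ^ n - 2)) : (fermatNumber n).Prime := by
  by_contra hnp
  have h2n : 2 ≤ 2 ^ n := Nat.le_self_pow hn 2
  have hp := Nat.minFac_prime (fermatNumber_ne_one n)
  have hle := two_pow_le_add_one_of_dvd_S hp
    ((Int.natCast_dvd_natCast.mpr (Nat.minFac_dvd _)).trans hdvd)
  rw [Nat.sub_add_cancel h2n] at hle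
  have hsq := Nat.minFac_sq_le_self (zero_lt_two.trans (two_lt_fermatNumber n)) hnp
  have h5 : 5 ≤ fermatNumber n := fermatNumber_mono (Nat.one_le_iff_ne_zero.mpr hn)
  have hq : fermatNumber n = 2 ^ 2 ^ n + 1 := rfl
  nlinarith [hp.two_le]

theorem fermat_llt_test (n : ℕ) (hn : 1 ≤ n) :
    Nat.Prime (2 ^ (2 ^ n) + 1) ↔ ((2 ^ (2 ^ n) + 1 : ℤ) ∣ S (2 ^ n - 2)) := by
  have hn0 : n ≠ 0 := by omega
  rw [show (2 ^ (2 ^ n) + 1 : ℤ) = fermatNumber n by simp [fermatNumber]]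
  exact ⟨dvd_S_of_fermatNumber_prime hn0, fermatNumber_prime_of_dvd_S hn0⟩
end

section
/- For every n ≥ 1, if N = 2^(2^n) + 1 is prime, then the Legendre symbol (3/N) equals -1. -/
theorem legendre_three_fermat (n : ℕ) (hn : 1 ≤ n)
    (hp : Nat.Prime (2 ^ (2 ^ n) + 1)) :
    @legendreSym (2 ^ (2 ^ n) + 1) ⟨hp⟩ 3 = -1 := by
  haveI : Fact (Nat.Prime (2 ^ (2 ^ n) + 1)) := ⟨hp⟩
  have h2 : 2 ≤ 2 ^ n := by
    calc 2 = 2 ^ 1 := rfl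
    _ ≤ 2 ^ n := Nat.pow_le_pow_right (by norm_num) hn
  have h4 : (2 ^ (2 ^ n) + 1) % 4 = 1 := by
    have : (4 : ℕ) ∣ 2 ^ (2 ^ n) := by
      calc (4 : ℕ) = 2 ^ 2 := rfl
      _ ∣ 2 ^ (2 ^ n) := pow_dvd_pow 2 h2
    omega
  rw [show (3:ℤ) = ((3:ℕ):ℤ) from rfl, ← legendreSym.quadratic_reciprocity_one_mod_four (q := 3) h4 (by norm_num)]
  have h3 : ((2 ^ (2 ^ n) + 1 : ℕ) : ℤ) % 3 = 2 := by
    have h1 : (3 : ℤ) ∣ 2 ^ (2 ^ n) - 1 := by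
      have := sub_dvd_pow_sub_pow (4 : ℤ) 1 (2 ^ (n - 1))
      simp only [one_pow] at this
      have heq : (4 : ℤ) ^ (2 ^ (n - 1)) = 2 ^ (2 ^ n) := by
        rw [show (4 : ℤ) = 2 ^ 2 by norm_num, ← pow_mul]
        congr 1
        rw [← pow_succ']
        congr 1
        omega
      rw [heq] at this
      norm_num at this
      exact this
    push_cast
    omega
  rw [legendreSym.mod, show (((3:ℕ):ℤ)) = 3 from rfl, h3]
  decide
end

section
/- For every n ≥ 1, if N = 2^(2^n) + 1 is prime, then the Legendre symbol (7/N) equals -1. -/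
lemma legendre7_aux3 : @legendreSym 7 ⟨by norm_num⟩ 3 = -1 := by decide

lemma legendre7_aux5 : @legendreSym 7 ⟨by norm_num⟩ 5 = -1 := by decide

theorem legendre_seven_fermat (n : ℕ) (hn : 1 ≤ n)
    (hp : Nat.Prime (2 ^ (2 ^ n) + 1)) :
    @legendreSym (2 ^ (2 ^ n) + 1) ⟨hp⟩ 7 = -1 := by
  haveI F : Fact (Nat.Prime (2 ^ (2 ^ n) + 1)) := ⟨hp⟩
  haveI : Fact (Nat.Prime 7) := ⟨by norm_num⟩
  have h2 : 2 ≤ 2 ^ n := by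
    calc 2 = 2 ^ 1 := rfl
    _ ≤ 2 ^ n := Nat.pow_le_pow_right (by norm_num) hn
  have h4 : (2 ^ (2 ^ n) + 1) % 4 = 1 := by
    have hd : (4 : ℕ) ∣ 2 ^ (2 ^ n) := by
      have : (2 : ℕ) ^ 2 ∣ 2 ^ (2 ^ n) := pow_dvd_pow 2 h2
      simpa using this
    omega
  -- reciprocity
  have hrec := legendreSym.quadratic_reciprocity_one_mod_four
    (p := 2 ^ (2 ^ n) + 1) (q := 7) h4 (by norm_num)
  -- compute N mod 7
  have hr3 : 2 ^ n % 3 = 1 ∨ 2 ^ n % 3 = 2 := by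
    have hnd : ¬ (3 : ℕ) ∣ 2 ^ n := by
      intro h
      have := (Nat.Prime.dvd_of_dvd_pow (by norm_num : Nat.Prime 3) h)
      omega
    omega
  have hkey : ∀ r, 2 ^ n % 3 = r → 2 ^ (2 ^ n) % 7 = 2 ^ r % 7 := by
    intro r hr
    have : 2 ^ n = 3 * (2 ^ n / 3) + r := by omega
    rw [this, pow_add, pow_mul]
    rw [Nat.mul_mod, Nat.pow_mod]
    norm_num
  have hmod : (2 ^ (2 ^ n) + 1) % 7 = 3 ∨ (2 ^ (2 ^ n) + 1) % 7 = 5 := by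
    rcases hr3 with h | h
    · left; have := hkey 1 h; omega
    · right; have := hkey 2 h; omega
  have hfin : legendreSym 7 ((2 ^ (2 ^ n) + 1 : ℕ) : ℤ) = -1 := by
    set m := 2 ^ (2 ^ n) with hm
    rw [legendreSym.mod]
    rcases hmod with h | h
    · rw [show ((m + 1 : ℕ) : ℤ) % ((7 : ℕ) : ℤ) = 3 from by omega]
      exact legendre7_aux3
    · rw [show ((m + 1 : ℕ) : ℤ) % ((7 : ℕ) : ℤ) = 5 from by omega]
      exact legendre7_aux5
  rw [show (7 : ℤ) = ((7 : ℕ) : ℤ) from by norm_num, ← hrec]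
  exact hfin
end

section
/- Let U, V be Lucas sequences with parameters P, Q and discriminant D = P^2 - 4Q over a commutative ring. Then for all m ≥ 1 and n, 2^(m-1)·U_{mn} = Σ_{i=0}^{⌊(m-1)/2⌋} C(m, 2i+1)·D^i·U_n^(2i+1)·V_n^(m-2i-1). -/
/-- A quadratic extension `R[√D]` represented as pairs `a + b√D`. -/
structure LucasExt (R : Type*) (D : R) where
  a : R
  b : R

namespace LucasExt

variable {R : Type*} [CommRing R] {D : R}

lemma ext' {p q : LucasExt R D} (h1 : p.a = q.a) (h2 : p.b = q.b) : p = q := by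
  cases p; cases q; cases h1; cases h2; rfl

instance : Add (LucasExt R D) := ⟨fun p q => ⟨p.a + q.a, p.b + q.b⟩⟩
instance : Neg (LucasExt R D) := ⟨fun p => ⟨-p.a, -p.b⟩⟩
instance : Zero (LucasExt R D) := ⟨⟨0, 0⟩⟩
instance : One (LucasExt R D) := ⟨⟨1, 0⟩⟩
instance : Mul (LucasExt R D) :=
  ⟨fun p q => ⟨p.a * q.a + D * p.b * q.b, p.a * q.b + p.b * q.a⟩⟩

@[simp] lemma add_a (p q : LucasExt R D) : (p + q).a = p.a + q.a := rfl
@[simp] lemma add_b (p q : LucasExt R D) : (p + q).b = p.b + q.b := rfl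
@[simp] lemma mul_a (p q : LucasExt R D) : (p * q).a = p.a * q.a + D * p.b * q.b := rfl
@[simp] lemma mul_b (p q : LucasExt R D) : (p * q).b = p.a * q.b + p.b * q.a := rfl
@[simp] lemma zero_a : (0 : LucasExt R D).a = 0 := rfl
@[simp] lemma zero_b : (0 : LucasExt R D).b = 0 := rfl
@[simp] lemma one_a : (1 : LucasExt R D).a = 1 := rfl
@[simp] lemma one_b : (1 : LucasExt R D).b = 0 := rfl
@[simp] lemma neg_a (p : LucasExt R D) : (-p).a = -p.a := rfl
@[simp] lemma neg_b (p : LucasExt R D) : (-p).b = -p.b := rfl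
@[simp] lemma mk_a (x y : R) : (LucasExt.mk x y : LucasExt R D).a = x := rfl
@[simp] lemma mk_b (x y : R) : (LucasExt.mk x y : LucasExt R D).b = y := rfl

instance : CommRing (LucasExt R D) where
  nsmul := nsmulRec
  zsmul := zsmulRec
  natCast n := ⟨(n : R), 0⟩
  natCast_zero := ext' (by show ((0 : ℕ) : R) = 0; simp) (by show (0 : R) = 0; rfl)
  natCast_succ n := ext' (by show ((n + 1 : ℕ) : R) = (n : R) + 1; push_cast; ring)
    (by show (0 : R) = 0 + 0; simp)
  intCast k := ⟨(k : R), 0⟩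
  intCast_ofNat n := ext' (by show ((Int.ofNat n : ℤ) : R) = ((n : ℕ) : R); simp)
    (by show (0 : R) = 0; rfl)
  intCast_negSucc n := ext' (by show ((Int.negSucc n : ℤ) : R) = -((n + 1 : ℕ) : R); push_cast; ring)
    (by show (0 : R) = -0; simp)
  add_assoc p q r := ext' (by simp [add_assoc]) (by simp [add_assoc])
  zero_add p := ext' (by simp) (by simp)
  add_zero p := ext' (by simp) (by simp)
  add_comm p q := ext' (by simp [add_comm]) (by simp [add_comm])
  neg_add_cancel p := ext' (by simp) (by simp)
  mul_assoc p q r := ext' (by simp; ring) (by simp; ring)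
  one_mul p := ext' (by simp) (by simp)
  mul_one p := ext' (by simp) (by simp)
  left_distrib p q r := ext' (by simp; ring) (by simp; ring)
  right_distrib p q r := ext' (by simp; ring) (by simp; ring)
  zero_mul p := ext' (by simp) (by simp)
  mul_zero p := ext' (by simp) (by simp)
  mul_comm p q := ext' (by simp; ring) (by simp; ring)

lemma natCast_eq (n : ℕ) : ((n : ℕ) : LucasExt R D) = ⟨(n : R), 0⟩ := rfl

/-- `b` as an additive monoid hom. -/
def bHom : LucasExt R D →+ R where
  toFun := LucasExt.b
  map_zero' := rfl
  map_add' _ _ := rfl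

lemma b_sum {ι : Type*} (s : Finset ι) (f : ι → LucasExt R D) :
    (∑ i ∈ s, f i).b = ∑ i ∈ s, (f i).b :=
  map_sum (bHom (D := D)) f s

lemma diag_pow (r : R) (t : ℕ) : ((⟨r, 0⟩ : LucasExt R D) ^ t) = ⟨r ^ t, 0⟩ := by
  induction t with
  | zero => exact ext' (by simp) (by simp)
  | succ k ih =>
    rw [pow_succ, pow_succ, ih]
    exact ext' (by simp) (by simp)

lemma off_pow (r : R) (j : ℕ) :
    ((⟨0, r⟩ : LucasExt R D) ^ (2 * j)) = ⟨D ^ j * r ^ (2 * j), 0⟩ ∧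
    ((⟨0, r⟩ : LucasExt R D) ^ (2 * j + 1)) = ⟨0, D ^ j * r ^ (2 * j + 1)⟩ := by
  induction j with
  | zero =>
    constructor
    · exact ext' (by norm_num) (by norm_num)
    · exact ext' (by norm_num) (by norm_num)
  | succ k ih =>
    obtain ⟨h1, h2⟩ := ih
    constructor
    · rw [show 2 * (k + 1) = (2 * k + 1) + 1 by ring, pow_succ, h2]
      exact ext' (by simp; ring) (by simp)
    · rw [show 2 * (k + 1) + 1 = (2 * k + 1) + 1 + 1 by ring, pow_succ, pow_succ, h2]
      exact ext' (by simp) (by simp; ring)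

end LucasExt

lemma sum_odd_reindex {R : Type*} [AddCommMonoid R] (f : ℕ → R) (M : ℕ) :
    ∑ k ∈ Finset.range M, (if k % 2 = 1 then f k else 0) =
      ∑ i ∈ Finset.range (M / 2), f (2 * i + 1) := by
  induction M with
  | zero => simp
  | succ M ih =>
    rw [Finset.sum_range_succ, ih]
    rcases Nat.even_or_odd M with he | ho
    · have h1 : M % 2 = 0 := Nat.even_iff.mp he
      have h2 : (M + 1) / 2 = M / 2 := by omega
      rw [h2]
      simp [h1]
    · have h1 : M % 2 = 1 := Nat.odd_iff.mp ho
      have h2 : (M + 1) / 2 = M / 2 + 1 := by omega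
      have h3 : 2 * (M / 2) + 1 = M := by omega
      rw [h2, Finset.sum_range_succ, h3]
      simp [h1]

theorem lucas_U_mul_expansion {R : Type*} [CommRing R] (P Q D : R) (U V : ℕ → R)
    (hD : D = P ^ 2 - 4 * Q)
    (hU0 : U 0 = 0) (hU1 : U 1 = 1)
    (hV0 : V 0 = 2) (hV1 : V 1 = P)
    (hUrec : ∀ n, U (n + 2) = P * U (n + 1) - Q * U n)
    (hVrec : ∀ n, V (n + 2) = P * V (n + 1) - Q * V n) :
    ∀ m n : ℕ, 1 ≤ m →
      2 ^ (m - 1) * U (m * n) =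
        ∑ i ∈ Finset.range ((m - 1) / 2 + 1),
          (m.choose (2 * i + 1) : R) * D ^ i * (U n) ^ (2 * i + 1) * (V n) ^ (m - 2 * i - 1) := by
  -- V in terms of U
  have hVU : ∀ b, V b = 2 * U (b + 1) - P * U b := by
    have key : ∀ b, V b = 2 * U (b + 1) - P * U b ∧ V (b + 1) = 2 * U (b + 2) - P * U (b + 1) := by
      intro b
      induction b with
      | zero =>
        constructor
        · rw [hV0, hU1, hU0]; ring
        · rw [hV1, hUrec 0, hU1, hU0]; ring
      | succ k ih =>
        refine ⟨ih.2, ?_⟩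
        show V (k + 2) = 2 * U (k + 3) - P * U (k + 2)
        linear_combination hVrec k - 2 * hUrec (k + 1) + P * ih.2 - Q * ih.1 + P * hUrec k
    exact fun b => (key b).1
  -- D·U in terms of V
  have hDU : ∀ b, D * U b = 2 * V (b + 1) - P * V b := by
    have key : ∀ b, D * U b = 2 * V (b + 1) - P * V b ∧
        D * U (b + 1) = 2 * V (b + 2) - P * V (b + 1) := by
      intro b
      induction b with
      | zero =>
        constructor
        · rw [hU0, hV1, hV0]; ring
        · rw [hU1, hVrec 0, hV1, hV0, hD]; ring
      | succ k ih =>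
        refine ⟨ih.2, ?_⟩
        show D * U (k + 2) = 2 * V (k + 3) - P * V (k + 2)
        linear_combination D * hUrec k + P * ih.2 - Q * ih.1 - 2 * hVrec (k + 1) + P * hVrec k
    exact fun b => (key b).1
  -- addition formulas
  have hadd : ∀ a b, (2 * U (a + b) = U a * V b + V a * U b ∧
      2 * V (a + b) = V a * V b + D * U a * U b) := by
    have stmt1 : ∀ b, 2 * U (1 + b) = U 1 * V b + V 1 * U b ∧
        2 * V (1 + b) = V 1 * V b + D * U 1 * U b := by
      intro b
      rw [Nat.add_comm 1 b, hU1, hV1]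
      constructor
      · linear_combination -hVU b
      · linear_combination -hDU b
    have key : ∀ a, (∀ b, 2 * U (a + b) = U a * V b + V a * U b ∧
        2 * V (a + b) = V a * V b + D * U a * U b) ∧
        (∀ b, 2 * U (a + 1 + b) = U (a + 1) * V b + V (a + 1) * U b ∧
        2 * V (a + 1 + b) = V (a + 1) * V b + D * U (a + 1) * U b) := by
      intro a
      induction a with
      | zero =>
        constructor
        · intro b
          rw [Nat.zero_add, hU0, hV0]
          constructor <;> ring
        · intro b
          exact stmt1 b
      | succ k ih =>
        refine ⟨ih.2, ?_⟩
        intro b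
        have e1 : k + 1 + 1 + b = (k + b) + 2 := by omega
        have e2 : k + 1 + b = (k + b) + 1 := by omega
        have ih1 := (ih.1 b)
        have ih2 := (ih.2 b)
        rw [e2] at ih2
        rw [e1]
        refine ⟨?_, ?_⟩
        · show 2 * U ((k + b) + 2) = U (k + 2) * V b + V (k + 2) * U b
          linear_combination 2 * hUrec (k + b) + P * ih2.1 - Q * ih1.1 - V b * hUrec k -
            U b * hVrec k
        · show 2 * V ((k + b) + 2) = V (k + 2) * V b + D * U (k + 2) * U b
          linear_combination 2 * hVrec (k + b) + P * ih2.2 - Q * ih1.2 - V b * hVrec k -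
            D * U b * hUrec k
    exact fun a => (key a).1
  intro m n hm
  obtain ⟨m0, rfl⟩ : ∃ m0, m = m0 + 1 := ⟨m - 1, by omega⟩
  -- the power formula in the extension ring
  have hpow : ∀ k : ℕ, ((⟨V n, U n⟩ : LucasExt R D) ^ (k + 1)) =
      ⟨2 ^ k * V ((k + 1) * n), 2 ^ k * U ((k + 1) * n)⟩ := by
    intro k
    induction k with
    | zero =>
      rw [pow_one]
      exact LucasExt.ext' (by simp) (by simp)
    | succ j ih =>
      rw [pow_succ, ih]
      have hU' := (hadd ((j + 1) * n) n).1
      have hV' := (hadd ((j + 1) * n) n).2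
      have e : (j + 1) * n + n = (j + 1 + 1) * n := by ring
      rw [e] at hU' hV'
      refine LucasExt.ext' ?_ ?_
      · simp only [LucasExt.mul_a, LucasExt.mk_a, LucasExt.mk_b]
        linear_combination (-(2 : R) ^ j) * hV'
      · simp only [LucasExt.mul_b, LucasExt.mk_a, LucasExt.mk_b]
        linear_combination (-(2 : R) ^ j) * hU'
  have key := congrArg LucasExt.b (hpow m0)
  simp only [LucasExt.mk_b] at key
  -- expand the power via the binomial theorem
  have expand : ((⟨V n, U n⟩ : LucasExt R D) ^ (m0 + 1)) =
      ((⟨0, U n⟩ : LucasExt R D) + ⟨V n, 0⟩) ^ (m0 + 1) := by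
    congr 1
    exact LucasExt.ext' (by simp) (by simp)
  rw [expand, add_pow] at key
  rw [LucasExt.b_sum] at key
  have term_eq : ∀ k ∈ Finset.range (m0 + 1 + 1),
      (((⟨0, U n⟩ : LucasExt R D) ^ k * (⟨V n, 0⟩ : LucasExt R D) ^ (m0 + 1 - k) *
        ((m0 + 1).choose k : LucasExt R D)).b) =
      (if k % 2 = 1 then
        ((m0 + 1).choose k : R) * D ^ (k / 2) * (U n) ^ k * (V n) ^ (m0 + 1 - k) else 0) := by
    intro k _
    rw [LucasExt.diag_pow, LucasExt.natCast_eq]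
    rcases Nat.even_or_odd k with he | ho
    · obtain ⟨j, hj⟩ := he
      have hk : k = 2 * j := by omega
      have h1 : k % 2 = 0 := by omega
      rw [hk, (LucasExt.off_pow (U n) j).1]
      simp [h1]
    · obtain ⟨j, hj⟩ := ho
      have hk : k = 2 * j + 1 := by omega
      have h1 : k % 2 = 1 := by omega
      have h2 : k / 2 = j := by omega
      rw [hk, (LucasExt.off_pow (U n) j).2]
      simp only [LucasExt.mul_b, LucasExt.mk_a, LucasExt.mk_b, ← hk, h1, if_true, h2]
      ring
  rw [Finset.sum_congr rfl term_eq, sum_odd_reindex] at key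
  have hrange : (m0 + 1 + 1) / 2 = (m0 + 1 - 1) / 2 + 1 := by omega
  rw [hrange] at key
  have hexp : 2 ^ (m0 + 1 - 1) = (2 : R) ^ m0 := by norm_num
  rw [hexp, ← key]
  refine Finset.sum_congr rfl ?_
  intro i hi
  have h1 : (2 * i + 1) / 2 = i := by omega
  have h2 : m0 + 1 - (2 * i + 1) = m0 + 1 - 2 * i - 1 := by omega
  rw [h1, h2]
end

section
/- Let U, V be Lucas sequences with parameters P, Q and discriminant D = P^2 - 4Q over a commutative ring. Then for all m ≥ 1 and n, 2^(m-1)·V_{mn} = Σ_{i=0}^{⌊m/2⌋} C(m, 2i)·D^i·U_n^(2i)·V_n^(m-2i). -/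
@[ext]
structure Qa (R : Type*) (D : R) where
  re : R
  im : R

namespace Qa

variable {R : Type*} [CommRing R] {D : R}

instance : Zero (Qa R D) := ⟨⟨0, 0⟩⟩
instance : One (Qa R D) := ⟨⟨1, 0⟩⟩
instance : Add (Qa R D) := ⟨fun x y => ⟨x.re + y.re, x.im + y.im⟩⟩
instance : Neg (Qa R D) := ⟨fun x => ⟨-x.re, -x.im⟩⟩
instance : Mul (Qa R D) := ⟨fun x y => ⟨x.re * y.re + D * x.im * y.im, x.re * y.im + x.im * y.re⟩⟩

@[simp] theorem zero_re : (0 : Qa R D).re = 0 := rfl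
@[simp] theorem zero_im : (0 : Qa R D).im = 0 := rfl
@[simp] theorem one_re : (1 : Qa R D).re = 1 := rfl
@[simp] theorem one_im : (1 : Qa R D).im = 0 := rfl
@[simp] theorem add_re (x y : Qa R D) : (x + y).re = x.re + y.re := rfl
@[simp] theorem add_im (x y : Qa R D) : (x + y).im = x.im + y.im := rfl
@[simp] theorem neg_re (x : Qa R D) : (-x).re = -x.re := rfl
@[simp] theorem neg_im (x : Qa R D) : (-x).im = -x.im := rfl
@[simp] theorem mul_re (x y : Qa R D) : (x * y).re = x.re * y.re + D * x.im * y.im := rfl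
@[simp] theorem mul_im (x y : Qa R D) : (x * y).im = x.re * y.im + x.im * y.re := rfl

instance : CommRing (Qa R D) where
  add_assoc := by intros; ext <;> simp <;> ring
  zero_add := by intros; ext <;> simp
  add_zero := by intros; ext <;> simp
  add_comm := by intros; ext <;> simp <;> ring
  mul_assoc := by intros; ext <;> simp <;> ring
  one_mul := by intros; ext <;> simp
  mul_one := by intros; ext <;> simp
  left_distrib := by intros; ext <;> simp <;> ring
  right_distrib := by intros; ext <;> simp <;> ring
  zero_mul := by intros; ext <;> simp
  mul_zero := by intros; ext <;> simp
  mul_comm := by intros; ext <;> simp <;> ring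
  neg_add_cancel := by intros; ext <;> simp
  nsmul := nsmulRec
  zsmul := zsmulRec

@[simp] theorem natCast_re (c : ℕ) : ((c : ℕ) : Qa R D).re = c := by
  induction c with
  | zero => simp
  | succ k ih => rw [Nat.cast_succ, Nat.cast_succ]; simp [ih]

@[simp] theorem natCast_im (c : ℕ) : ((c : ℕ) : Qa R D).im = 0 := by
  induction c with
  | zero => simp
  | succ k ih => rw [Nat.cast_succ]; simp [ih]

theorem base_pow (r : R) : ∀ k, ((⟨r, 0⟩ : Qa R D)) ^ k = ⟨r ^ k, 0⟩ := by
  intro k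
  induction k with
  | zero => ext <;> simp
  | succ j ih => rw [pow_succ, ih]; ext <;> simp [pow_succ]

theorem rt_pow_even (u : R) : ∀ j, ((⟨0, u⟩ : Qa R D)) ^ (2 * j) = ⟨D ^ j * u ^ (2 * j), 0⟩ := by
  intro j
  induction j with
  | zero => ext <;> simp
  | succ j ih =>
    have h : 2 * (j + 1) = 2 * j + 1 + 1 := by ring
    rw [h, pow_succ, pow_succ, ih]
    ext <;> simp <;> ring

theorem rt_pow_odd (u : R) (j : ℕ) :
    ((⟨0, u⟩ : Qa R D)) ^ (2 * j + 1) = ⟨0, D ^ j * u ^ (2 * j + 1)⟩ := by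
  rw [pow_succ, rt_pow_even]
  ext <;> simp <;> ring

def reHom : Qa R D →+ R where
  toFun := Qa.re
  map_zero' := rfl
  map_add' _ _ := rfl

@[simp] theorem reHom_apply (x : Qa R D) : (reHom : Qa R D →+ R) x = x.re := rfl

end Qa
set_option maxHeartbeats 1000000 in
theorem lucas_V_mul_expansion {R : Type*} [CommRing R] (P Q D : R) (U V : ℕ → R)
    (hD : D = P ^ 2 - 4 * Q)
    (hU0 : U 0 = 0) (hU1 : U 1 = 1)
    (hV0 : V 0 = 2) (hV1 : V 1 = P)
    (hUrec : ∀ n, U (n + 2) = P * U (n + 1) - Q * U n)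
    (hVrec : ∀ n, V (n + 2) = P * V (n + 1) - Q * V n) :
    ∀ m n : ℕ, 1 ≤ m →
      2 ^ (m - 1) * V (m * n) =
        ∑ i ∈ Finset.range (m / 2 + 1),
          (m.choose (2 * i) : R) * D ^ i * (U n) ^ (2 * i) * (V n) ^ (m - 2 * i) := by
  -- shift identities
  have hA : ∀ a, 2 * V (a + 1) = P * V a + D * U a ∧ 2 * U (a + 1) = P * U a + V a := by
    have key : ∀ a, (2 * V (a + 1) = P * V a + D * U a ∧ 2 * U (a + 1) = P * U a + V a) ∧
        (2 * V (a + 2) = P * V (a + 1) + D * U (a + 1) ∧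
          2 * U (a + 2) = P * U (a + 1) + V (a + 1)) := by
      intro a
      induction a with
      | zero =>
        refine ⟨⟨?_, ?_⟩, ?_, ?_⟩
        · rw [hV1, hV0, hU0]; ring
        · rw [hU1, hU0, hV0]; ring
        · rw [hVrec 0, hV1, hV0, hU1, hD]; ring
        · rw [hUrec 0, hU1, hU0, hV1]; ring
      | succ a ih =>
        refine ⟨ih.2, ?_, ?_⟩
        · calc 2 * V (a + 1 + 2) = P * (2 * V (a + 2)) - Q * (2 * V (a + 1)) := by
                rw [hVrec (a + 1)]; ring
            _ = P * (P * V (a + 1) + D * U (a + 1)) - Q * (P * V a + D * U a) := by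
                rw [ih.2.1, ih.1.1]
            _ = P * (P * V (a + 1) - Q * V a) + D * (P * U (a + 1) - Q * U a) := by ring
            _ = P * V (a + 1 + 1) + D * U (a + 1 + 1) := by rw [hVrec a, hUrec a]
        · calc 2 * U (a + 1 + 2) = P * (2 * U (a + 2)) - Q * (2 * U (a + 1)) := by
                rw [hUrec (a + 1)]; ring
            _ = P * (P * U (a + 1) + V (a + 1)) - Q * (P * U a + V a) := by
                rw [ih.2.2, ih.1.2]
            _ = P * (P * U (a + 1) - Q * U a) + (P * V (a + 1) - Q * V a) := by ring
            _ = P * U (a + 1 + 1) + V (a + 1 + 1) := by rw [hUrec a, hVrec a]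
    exact fun a => (key a).1
  -- addition formulas
  have hB : ∀ b a, 2 * V (a + b) = V a * V b + D * U a * U b ∧
      2 * U (a + b) = U a * V b + V a * U b := by
    have key : ∀ b, (∀ a, 2 * V (a + b) = V a * V b + D * U a * U b ∧
          2 * U (a + b) = U a * V b + V a * U b) ∧
        (∀ a, 2 * V (a + (b + 1)) = V a * V (b + 1) + D * U a * U (b + 1) ∧
          2 * U (a + (b + 1)) = U a * V (b + 1) + V a * U (b + 1)) := by
      intro b
      induction b with
      | zero =>
        refine ⟨fun a => ⟨?_, ?_⟩, fun a => ⟨?_, ?_⟩⟩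
        · rw [Nat.add_zero, hV0, hU0]; ring
        · rw [Nat.add_zero, hV0, hU0]; ring
        · rw [Nat.zero_add, hV1, hU1]; linear_combination (hA a).1
        · rw [Nat.zero_add, hV1, hU1]; linear_combination (hA a).2
      | succ b ih =>
        refine ⟨ih.2, fun a => ⟨?_, ?_⟩⟩
        · have e1 := (ih.2 a).1
          have e0 := (ih.1 a).1
          calc 2 * V (a + (b + 1 + 1)) = P * (2 * V (a + b + 1)) - Q * (2 * V (a + b)) := by
                rw [show a + (b + 1 + 1) = a + b + 2 from by omega, hVrec (a + b)]; ring
            _ = P * (V a * V (b + 1) + D * U a * U (b + 1)) - Q * (V a * V b + D * U a * U b)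
                := by rw [show a + b + 1 = a + (b + 1) from by omega, e1, e0]
            _ = V a * (P * V (b + 1) - Q * V b) + D * U a * (P * U (b + 1) - Q * U b) := by ring
            _ = V a * V (b + 1 + 1) + D * U a * U (b + 1 + 1) := by rw [hVrec b, hUrec b]
        · have e1 := (ih.2 a).2
          have e0 := (ih.1 a).2
          calc 2 * U (a + (b + 1 + 1)) = P * (2 * U (a + b + 1)) - Q * (2 * U (a + b)) := by
                rw [show a + (b + 1 + 1) = a + b + 2 from by omega, hUrec (a + b)]; ring
            _ = P * (U a * V (b + 1) + V a * U (b + 1)) - Q * (U a * V b + V a * U b)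
                := by rw [show a + b + 1 = a + (b + 1) from by omega, e1, e0]
            _ = U a * (P * V (b + 1) - Q * V b) + V a * (P * U (b + 1) - Q * U b) := by ring
            _ = U a * V (b + 1 + 1) + V a * U (b + 1 + 1) := by rw [hVrec b, hUrec b]
    exact fun b a => (key b).1 a
  intro m n hm
  -- power formula in Qa R D
  have hpow : ∀ m, 1 ≤ m → ((⟨V n, U n⟩ : Qa R D)) ^ m =
      ⟨2 ^ (m - 1) * V (m * n), 2 ^ (m - 1) * U (m * n)⟩ := by
    intro m hm
    induction m, hm using Nat.le_induction with
    | base => ext <;> simp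
    | succ m hm ih =>
      have h2 : (2 : R) ^ (m + 1 - 1) = 2 * 2 ^ (m - 1) := by
        rw [Nat.add_sub_cancel]
        conv_lhs => rw [show m = (m - 1) + 1 from by omega]
        rw [pow_succ]; ring
      have hmn : (m + 1) * n = m * n + n := by ring
      have hV' := (hB n (m * n)).1
      have hU' := (hB n (m * n)).2
      rw [pow_succ, ih]
      ext
      · show 2 ^ (m - 1) * V (m * n) * V n + D * (2 ^ (m - 1) * U (m * n)) * U n =
          2 ^ (m + 1 - 1) * V ((m + 1) * n)
        rw [h2, hmn]
        linear_combination (-(2:R) ^ (m - 1)) * hV'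
      · show 2 ^ (m - 1) * V (m * n) * U n + 2 ^ (m - 1) * U (m * n) * V n =
          2 ^ (m + 1 - 1) * U ((m + 1) * n)
        rw [h2, hmn]
        linear_combination (-(2:R) ^ (m - 1)) * hU'
  -- binomial expansion
  have hx : (⟨V n, U n⟩ : Qa R D) = ⟨0, U n⟩ + ⟨V n, 0⟩ := by ext <;> simp
  have hbin := add_pow (⟨0, U n⟩ : Qa R D) (⟨V n, 0⟩ : Qa R D) m
  rw [← hx, hpow m hm] at hbin
  have hre := congrArg Qa.re hbin
  rw [show (⟨2 ^ (m - 1) * V (m * n), 2 ^ (m - 1) * U (m * n)⟩ : Qa R D).re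
      = 2 ^ (m - 1) * V (m * n) from rfl] at hre
  rw [hre]
  rw [show (∑ k ∈ Finset.range (m + 1),
        (⟨0, U n⟩ : Qa R D) ^ k * (⟨V n, 0⟩ : Qa R D) ^ (m - k) * (m.choose k : Qa R D)).re
      = ∑ k ∈ Finset.range (m + 1),
        ((⟨0, U n⟩ : Qa R D) ^ k * (⟨V n, 0⟩ : Qa R D) ^ (m - k) * (m.choose k : Qa R D)).re
      from map_sum (Qa.reHom) _ _]
  -- restrict to even indices
  rw [← Finset.sum_filter_of_ne (p := fun k => k % 2 = 0)
      (f := fun k => ((⟨0, U n⟩ : Qa R D) ^ k * (⟨V n, 0⟩ : Qa R D) ^ (m - k)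
        * (m.choose k : Qa R D)).re) ?vanish]
  case vanish =>
    intro k _ hne
    by_contra hodd
    apply hne
    obtain ⟨j, rfl⟩ : ∃ j, k = 2 * j + 1 := ⟨k / 2, by omega⟩
    show ((⟨0, U n⟩ : Qa R D) ^ (2 * j + 1) * (⟨V n, 0⟩ : Qa R D) ^ (m - (2 * j + 1))
        * (m.choose (2 * j + 1) : Qa R D)).re = 0
    rw [Qa.rt_pow_odd, Qa.base_pow]
    simp
  refine (Finset.sum_nbij' (i := fun i => 2 * i) (j := fun k => k / 2) ?_ ?_ ?_ ?_ ?_).symm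
  · intro i hi
    simp only [Finset.mem_range] at hi
    simp only [Finset.mem_filter, Finset.mem_range]
    omega
  · intro k hk
    simp only [Finset.mem_filter, Finset.mem_range] at hk
    simp only [Finset.mem_range]
    omega
  · intro i hi; show 2 * i / 2 = i; omega
  · intro k hk
    simp only [Finset.mem_filter, Finset.mem_range] at hk
    show 2 * (k / 2) = k; omega
  · intro i hi
    rw [Qa.rt_pow_even, Qa.base_pow]
    simp only [Qa.mul_re, Qa.mul_im, Qa.natCast_re, Qa.natCast_im]
    ring
end

section
/- Let p be an odd prime not dividing Q, and let V be the companion Lucas sequence with parameters P = √R (R an integer coprime to Q) and Q. Then V_p = √R · W for an integer W, and W ≡ (R/p) (mod p), where (R/p) is the Legendre symbol. Equivalently, V_p ≡ R^((p-1)/2)·√R (mod p) in ℤ[√R]. -/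
/-!
Adjoin to `ℤ[√R]` a root `α` of `X² - √R X + Q` and put `β = √R - α`. Then `Vₙ = αⁿ + βⁿ`, so
`V_p ≡ (α + β)ᵖ = √Rᵖ = R^((p-1)/2) √R` modulo `p`; the congruence descends to `ℤ[√R]` because the
extension is free with basis `1, α`. Since `Vₙ` lies alternately in `ℤ` and `ℤ √R`, `V_p = W √R`,
and comparing `√R`-coefficients together with Euler's criterion gives `W ≡ (R/p)`.
-/

/-- The companion Lucas sequence with parameters `P = √R`, `Q` in `ℤ[√R]`. -/
def lucasV (R Q : ℤ) : ℕ → Zsqrtd R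
  | 0 => 2
  | 1 => Zsqrtd.sqrtd
  | n + 2 => Zsqrtd.sqrtd * lucasV R Q (n + 1) - (Q : Zsqrtd R) * lucasV R Q n

open Polynomial

theorem AdjoinRoot.of_dvd_of_iff {S : Type*} [CommRing S] [Nontrivial S] {g : S[X]} (hg : g.Monic)
    (hdeg : 0 < g.degree) {a b : S} : of g a ∣ of g b ↔ a ∣ b := by
  refine ⟨fun ⟨r, hr⟩ => ?_, map_dvd _⟩
  have hb : modByMonicHom hg (of g b) = C b := by
    rw [← AdjoinRoot.mk_C, modByMonicHom_mk,
      (modByMonic_eq_self_iff hg).mpr (degree_C_le.trans_lt hdeg)]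
  refine ⟨(modByMonicHom hg r).coeff 0, ?_⟩
  rw [hr, ← algebraMap_eq, ← Algebra.smul_def, map_smul] at hb
  simpa using congrArg (coeff · 0) hb.symm

theorem eq_pow_add_pow_of_companion_rec {A : Type*} [CommRing A] (α β : A) (v : ℕ → A)
    (h0 : v 0 = 2) (h1 : v 1 = α + β)
    (hrec : ∀ n, v (n + 2) = (α + β) * v (n + 1) - α * β * v n) (n : ℕ) :
    v n = α ^ n + β ^ n := by
  induction n using Nat.twoStepInduction with
  | zero => rw [h0]; norm_num
  | one => rw [h1]; ring
  | more n ih ih' => rw [hrec, ih, ih']; ring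

theorem prime_dvd_pow_sub_of_companion_rec {S : Type*} [CommRing S] [Nontrivial S] (P Q : S)
    (v : ℕ → S) (h0 : v 0 = 2) (h1 : v 1 = P)
    (hrec : ∀ n, v (n + 2) = P * v (n + 1) - Q * v n) {p : ℕ} (hp : p.Prime) :
    (p : S) ∣ P ^ p - v p := by
  have hg : (X ^ 2 - C P * X + C Q).Monic := by monicity!
  have hdeg : (X ^ 2 - C P * X + C Q).degree = 2 := by compute_degree!
  set g : S[X] := X ^ 2 - C P * X + C Q
  set φ := AdjoinRoot.of g
  set α := AdjoinRoot.root g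
  set β := φ P - α
  have hsum : α + β = φ P := add_sub_cancel α (φ P)
  have hprod : α * β = φ Q := by
    have := AdjoinRoot.eval₂_root g
    simp only [g, eval₂_add, eval₂_sub, eval₂_X_pow, eval₂_mul, eval₂_C, eval₂_X] at this
    linear_combination -this
  have hv (n : ℕ) : φ (v n) = α ^ n + β ^ n := by
    refine eq_pow_add_pow_of_companion_rec α β (φ ∘ v) ?_ ?_ ?_ n
    · simp [h0, map_ofNat]
    · simp [h1, hsum]
    · intro n; simp [hrec, hsum, hprod]
  obtain ⟨r, hr⟩ := exists_add_pow_prime_eq hp α β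
  refine (AdjoinRoot.of_dvd_of_iff hg (by rw [hdeg]; norm_num)).mp ⟨α * β * r, ?_⟩
  rw [map_sub, map_pow, hv, ← hsum, hr, map_natCast]
  ring

theorem lucasV_parity (R Q : ℤ) (k : ℕ) :
    (lucasV R Q (2 * k)).im = 0 ∧ (lucasV R Q (2 * k + 1)).re = 0 := by
  induction k with
  | zero => simp [lucasV]
  | succ k ih =>
    rw [Nat.mul_succ]
    constructor <;> simp [lucasV, ih.1, ih.2]

theorem Zsqrtd.eq_im_mul_sqrtd_of_re_eq_zero {d : ℤ} {z : ℤ√d} (h : z.re = 0) :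
    z = (z.im : ℤ√d) * sqrtd := by
  ext <;> simp [h]

theorem Zsqrtd.sqrtd_pow_two_mul_add_one (d : ℤ) (m : ℕ) :
    (sqrtd : ℤ√d) ^ (2 * m + 1) = ((d ^ m : ℤ) : ℤ√d) * sqrtd := by
  rw [pow_succ, pow_mul, sq, dmuld]
  push_cast
  rfl

theorem lucas_V_p_eq_legendre_general (R Q : ℤ)
    (p : ℕ) (hp : p.Prime) (hodd : Odd p) :
    ∃ W : ℤ, lucasV R Q p = (W : Zsqrtd R) * Zsqrtd.sqrtd ∧
      W ≡ @legendreSym p ⟨hp⟩ R [ZMOD (p : ℤ)] := by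
  have : Fact p.Prime := ⟨hp⟩
  obtain ⟨m, rfl⟩ := hodd
  have hV := Zsqrtd.eq_im_mul_sqrtd_of_re_eq_zero (lucasV_parity R Q m).2
  refine ⟨(lucasV R Q (2 * m + 1)).im, hV, ?_⟩
  have hdvd := prime_dvd_pow_sub_of_companion_rec Zsqrtd.sqrtd (Q : ℤ√R) (lucasV R Q)
    rfl rfl (fun _ => rfl) hp
  rw [Zsqrtd.sqrtd_pow_two_mul_add_one, hV, ← sub_mul, ← Int.cast_sub, ← Int.cast_natCast,
    Zsqrtd.intCast_dvd] at hdvd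
  have heuler :
      ((legendreSym (2 * m + 1) R : ℤ) : ZMod (2 * m + 1)) = ((R ^ m : ℤ) : ZMod _) := by
    rw [legendreSym.eq_pow]; push_cast; congr; omega
  rw [← ZMod.intCast_eq_intCast_iff, heuler, ZMod.intCast_eq_intCast_iff]
  exact Int.modEq_iff_dvd.mpr (by simpa [-Int.cast_pow, -Int.cast_sub] using hdvd.2)

theorem lucas_V_p_eq_legendre (R Q : ℤ) (hRQ : IsCoprime R Q)
    (p : ℕ) (hp : p.Prime) (hodd : Odd p) (hpQ : ¬ ((p : ℤ) ∣ Q)) :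
    ∃ W : ℤ, lucasV R Q p = (W : Zsqrtd R) * Zsqrtd.sqrtd ∧
      W ≡ @legendreSym p ⟨hp⟩ R [ZMOD (p : ℤ)] :=
  lucas_V_p_eq_legendre_general R Q p hp hodd
end
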